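/- arXiv:2503.01702 — 6 statements merged into one kernel-verified Lean document; each statement's English description precedes it below -/
import Mathlib

section
/- Let φ: ℝⁿ → ℝᵐ be defined by φ(x)_j = Σᵢ φᵢʲ(xᵢ), where each φᵢʲ: ℝ → ℝ is piecewise linear with at most k pieces. Then φ is piecewise linear with at most k^(n·m) pieces. -/
/-- A function φ : ℝ → ℝ is piecewise linear with at most k pieces. -/
def PWL1 (k : ℕ) (φ : ℝ → ℝ) : Prop :=
  ∃ P : Fin k → Set ℝ, (∀ x, ∃ i, x ∈ P i) ∧
    ∀ i, ∃ a c : ℝ, ∀ x ∈ P i, φ x = a * x + c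

/-- A function f : ℝⁿ → ℝᵐ is piecewise linear with at most k pieces. -/
def PWL (n m k : ℕ) (f : (Fin n → ℝ) → (Fin m → ℝ)) : Prop :=
  ∃ P : Fin k → Set (Fin n → ℝ), (∀ x, ∃ i, x ∈ P i) ∧
    ∀ i, ∃ (A : Matrix (Fin m) (Fin n) ℝ) (c : Fin m → ℝ),
      ∀ x ∈ P i, f x = A.mulVec x + c

/-!
Choose a piece for every activation function `φ j i`. On the set of points `x` whose
coordinates `x i` lie in the chosen pieces, every `φ j i (x i)` is affine in `x i`, so the layer is
affine in `x`. These sets cover `ℝⁿ` and are indexed by the `k ^ (n * m)` choice functions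
`Fin m → Fin n → Fin k`.
-/

open Finset

theorem PWL.of_fintype {n m : ℕ} {ι : Type*} [Fintype ι] {f : (Fin n → ℝ) → (Fin m → ℝ)}
    (P : ι → Set (Fin n → ℝ)) (hcover : ∀ x, ∃ s, x ∈ P s)
    (haffine : ∀ s, ∃ (A : Matrix (Fin m) (Fin n) ℝ) (c : Fin m → ℝ),
      ∀ x ∈ P s, f x = A.mulVec x + c) :
    PWL n m (Fintype.card ι) f := by
  refine ⟨P ∘ (Fintype.equivFin ι).symm, fun x => ?_, fun t => haffine _⟩
  obtain ⟨s, hs⟩ := hcover x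
  exact ⟨Fintype.equivFin ι s, by simpa using hs⟩

theorem kanLayer_eq_mulVec_add {n m : ℕ} {φ : Fin m → Fin n → ℝ → ℝ} {a c : Fin m → Fin n → ℝ}
    {x : Fin n → ℝ} (h : ∀ j i, φ j i (x i) = a j i * x i + c j i) :
    (fun j => ∑ i, φ j i (x i)) = (Matrix.of a).mulVec x + fun j => ∑ i, c j i := by
  funext j
  simp only [h, Matrix.mulVec, dotProduct, Matrix.of_apply, Pi.add_apply, sum_add_distrib]

/-- a KAN layer φ(x)_j = Σᵢ φᵢʲ(xᵢ), whose activation functions each have at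
most k pieces, is piecewise linear with at most k^(n·m) pieces. -/
theorem stmt4 (n m k : ℕ) (φ : Fin m → Fin n → ℝ → ℝ)
    (hφ : ∀ j i, PWL1 k (φ j i)) :
    PWL n m (k ^ (n * m)) (fun x j => ∑ i, φ j i (x i)) := by
  choose P hcover hlin using hφ
  choose a c hlin using hlin
  have hpieces := PWL.of_fintype (f := fun x j => ∑ i, φ j i (x i))
    (fun s : Fin m → Fin n → Fin k => {x | ∀ j i, x i ∈ P j i (s j i)})
    (fun x => by
      choose s hs using fun j i => hcover j i (x i)
      exact ⟨s, hs⟩)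
    (fun s => ⟨Matrix.of fun j i => a j i (s j i), fun j => ∑ i, c j i (s j i),
      fun x hx => kanLayer_eq_mulVec_add fun j i => hlin j i (s j i) (x i) (hx j i)⟩)
  rwa [Fintype.card_fun, Fintype.card_fun, Fintype.card_fin, Fintype.card_fin,
    Fintype.card_fin, ← pow_mul] at hpieces
end

section
/- Let f: ℝⁿ → ℝ be a KAN with L+1 layers of widths n = n₀, n₁, ..., n_L, n_{L+1} = 1, in which every activation function is piecewise linear with at most k pieces. Then the number of linear regions of f is at most k^(n_L + Σ_{i=0}^{L−1} nᵢ·nᵢ₊₁). -/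
/-- A single KAN layer: x ↦ (Σ_p φ_p^q(x_p))_q. -/
def kanLayer {n m : ℕ} (φ : Fin m → Fin n → ℝ → ℝ) (x : Fin n → ℝ) : Fin m → ℝ :=
  fun q => ∑ p, φ q p (x p)

/-- `IsKANk k n m f L e` : f : ℝⁿ → ℝᵐ is a KAN with L layers whose activation functions are
all piecewise linear with at most k pieces, where e = Σᵢ nᵢ·nᵢ₊₁ accumulates the products of
consecutive layer widths n = n₀, n₁, ..., n_L = m. -/
inductive IsKANk (k : ℕ) : (n m : ℕ) → ((Fin n → ℝ) → (Fin m → ℝ)) → ℕ → ℕ → Prop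
  | layer {n m : ℕ} (φ : Fin m → Fin n → ℝ → ℝ) (h : ∀ q p, PWL1 k (φ q p)) :
      IsKANk k n m (kanLayer φ) 1 (n * m)
  | comp {n m l L e : ℕ} {f : (Fin n → ℝ) → (Fin m → ℝ)} (hf : IsKANk k n m f L e)
      (φ : Fin l → Fin m → ℝ → ℝ) (h : ∀ q p, PWL1 k (φ q p)) :
      IsKANk k n l (fun x => kanLayer φ (f x)) (L + 1) (e + m * l)

/-! A KAN layer is affine on every cell obtained by choosing one piece for each of its `n * m`
activation functions, so it has at most `k ^ (n * m)` pieces. Composing with a further piecewise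
linear map refines the partition by preimages, which multiplies the numbers of pieces. -/

section PiecewiseLinear

open Matrix

variable {n m l : ℕ}

theorem PWL.of_fintype_cover {ι : Type*} [Fintype ι] {f : (Fin n → ℝ) → (Fin m → ℝ)}
    (P : ι → Set (Fin n → ℝ)) (hcov : ∀ x, ∃ i, x ∈ P i)
    (haff : ∀ i, ∃ (A : Matrix (Fin m) (Fin n) ℝ) (c : Fin m → ℝ), ∀ x ∈ P i, f x = A *ᵥ x + c) :
    PWL n m (Fintype.card ι) f := by
  let E := Fintype.equivFin ι
  refine ⟨fun j => P (E.symm j), fun x => ?_, fun j => haff (E.symm j)⟩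
  obtain ⟨i, hi⟩ := hcov x
  exact ⟨E i, by simpa using hi⟩

theorem PWL.kanLayer {k : ℕ} (φ : Fin m → Fin n → ℝ → ℝ) (h : ∀ q p, PWL1 k (φ q p)) :
    PWL n m (k ^ (n * m)) (kanLayer φ) := by
  choose P hcov a c haff using h
  have hcard : Fintype.card (Fin m × Fin n → Fin k) = k ^ (n * m) := by simp [mul_comm]
  rw [← hcard]
  refine .of_fintype_cover (fun σ => {x | ∀ q p, x p ∈ P q p (σ (q, p))}) (fun x => ?_)
    (fun σ => ⟨fun q p => a q p (σ (q, p)), fun q => ∑ p, c q p (σ (q, p)), fun x hx => ?_⟩)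
  · choose σ hσ using fun q p => hcov q p (x p)
    exact ⟨fun qp => σ qp.1 qp.2, hσ⟩
  · funext q
    simp only [_root_.kanLayer, Matrix.mulVec, dotProduct, Pi.add_apply, ← Finset.sum_add_distrib]
    exact Finset.sum_congr rfl fun p _ => haff q p _ (x p) (hx q p)

theorem PWL.comp {K K' : ℕ} {f : (Fin n → ℝ) → (Fin m → ℝ)} {g : (Fin m → ℝ) → (Fin l → ℝ)}
    (hg : PWL m l K' g) (hf : PWL n m K f) : PWL n l (K * K') (g ∘ f) := by
  obtain ⟨P, hPcov, hPaff⟩ := hf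
  obtain ⟨Q, hQcov, hQaff⟩ := hg
  rw [← Fintype.card_fin K, ← Fintype.card_fin K', ← Fintype.card_prod]
  refine .of_fintype_cover (fun ij => P ij.1 ∩ f ⁻¹' Q ij.2) (fun x => ?_) (fun ⟨i, j⟩ => ?_)
  · obtain ⟨i, hi⟩ := hPcov x
    obtain ⟨j, hj⟩ := hQcov (f x)
    exact ⟨(i, j), hi, hj⟩
  · obtain ⟨A, a, hA⟩ := hPaff i
    obtain ⟨B, b, hB⟩ := hQaff j
    refine ⟨B * A, B *ᵥ a + b, fun x ⟨hxP, hxQ⟩ => ?_⟩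
    rw [Function.comp_apply, hB (f x) hxQ, hA x hxP, Matrix.mulVec_add, Matrix.mulVec_mulVec,
      add_assoc]

end PiecewiseLinear

theorem IsKANk.pwl {k n m L e : ℕ} {f : (Fin n → ℝ) → (Fin m → ℝ)} (hf : IsKANk k n m f L e) :
    PWL n m (k ^ e) f := by
  induction hf with
  | layer φ h => exact .kanLayer φ h
  | comp _ φ h ih => rw [pow_add]; exact (PWL.kanLayer φ h).comp ih

/-- a KAN f : ℝⁿ → ℝ with layer widths n = n₀, ..., n_L, n_{L+1} = 1 whose
activation functions are piecewise linear with at most k pieces has at most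
k^(n_L·1 + Σ_{i=0}^{L−1} nᵢ·nᵢ₊₁) linear regions, i.e. it is piecewise linear with at most
that many pieces. -/
theorem stmt5 (k n L e : ℕ) (f : (Fin n → ℝ) → (Fin 1 → ℝ))
    (hf : IsKANk k n 1 f L e) : PWL n 1 (k ^ e) f :=
  hf.pwl
end

section
/- Every piecewise linear KAN f: ℝⁿ → ℝ (a composition of KAN layers with piecewise linear activation functions, each with finitely many pieces) equals a ReLU network: there exist affine maps A₀, ..., A_L such that f(x) = (A_L ∘ ReLU ∘ A_{L−1} ∘ ... ∘ ReLU ∘ A₀)(x) for all x ∈ ℝⁿ. -/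
/-- Componentwise ReLU. -/
def reluV {n : ℕ} (x : Fin n → ℝ) : Fin n → ℝ := fun i => max (x i) 0

/-- `IsKAN Q n m f L` : f is a KAN with L layers all of whose activation functions satisfy Q. -/
inductive IsKAN (Q : (ℝ → ℝ) → Prop) : (n m : ℕ) → ((Fin n → ℝ) → (Fin m → ℝ)) → ℕ → Prop
  | layer {n m : ℕ} (φ : Fin m → Fin n → ℝ → ℝ) (h : ∀ q p, Q (φ q p)) :
      IsKAN Q n m (kanLayer φ) 1
  | comp {n m l L : ℕ} {f : (Fin n → ℝ) → (Fin m → ℝ)} (hf : IsKAN Q n m f L)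
      (φ : Fin l → Fin m → ℝ → ℝ) (h : ∀ q p, Q (φ q p)) :
      IsKAN Q n l (fun x => kanLayer φ (f x)) (L + 1)

/-- `IsReLUNet n m g L` : g is a ReLU network with L affine layers (ReLU between consecutive
affine layers, affine output layer). -/
inductive IsReLUNet : (n m : ℕ) → ((Fin n → ℝ) → (Fin m → ℝ)) → ℕ → Prop
  | affine {n m : ℕ} (W : Matrix (Fin m) (Fin n) ℝ) (b : Fin m → ℝ) :
      IsReLUNet n m (fun x => W.mulVec x + b) 1
  | comp {n m l L : ℕ} {f : (Fin n → ℝ) → (Fin m → ℝ)} (hf : IsReLUNet n m f L)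
      (W : Matrix (Fin l) (Fin m) ℝ) (b : Fin l → ℝ) :
      IsReLUNet n l (fun x => W.mulVec (reluV (f x)) + b) (L + 1)

/-!
Every activation φ is continuous and, on each of finitely many pieces, equal to one of finitely
many lines; between two consecutive crossing points of these lines it is therefore affine. At a
breakpoint s, subtracting the hinge (φ'(s⁺) - φ'(s⁻)) * max (x - s) 0 removes the kink, so by
induction on the breakpoints φ x = c + ∑ⱼ dⱼ * max (wⱼ * x + bⱼ) 0. A KAN layer with such
activations is one hidden ReLU layer followed by an affine map, and an affine map applied after a
ReLU network merges into its output layer, so a KAN with L layers is a ReLU network with L + 1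
affine layers.
-/

open Set Matrix

def IsHingeSum (φ : ℝ → ℝ) : Prop :=
  ∃ (N : ℕ) (c : ℝ) (w b d : Fin N → ℝ), ∀ x, φ x = c + ∑ j, d j * max (w j * x + b j) 0

theorem isHingeSum_affine (a c : ℝ) : IsHingeSum fun x => a * x + c := by
  refine ⟨2, c, ![1, -1], 0, ![a, -a], fun x => ?_⟩
  simp only [Fin.sum_univ_two, cons_val_zero, cons_val_one, Pi.zero_apply,
    one_mul, neg_mul, add_zero]
  linear_combination -a * max_zero_sub_max_neg_zero_eq_self x

theorem IsHingeSum.add_hinge {φ : ℝ → ℝ} (hφ : IsHingeSum φ) (d s : ℝ) :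
    IsHingeSum fun x => φ x + d * max (x - s) 0 := by
  obtain ⟨N, c, w, b, d', hφ⟩ := hφ
  refine ⟨N + 1, c, Fin.cons 1 w, Fin.cons (-s) b, Fin.cons d d', fun x => ?_⟩
  simp only [hφ, Fin.sum_univ_succ, Fin.cons_zero, Fin.cons_succ, one_mul, ← sub_eq_add_neg]
  ring

def AffineOn (φ : ℝ → ℝ) (I : Set ℝ) : Prop :=
  ∃ a c : ℝ, ∀ x ∈ I, φ x = a * x + c

def IsPiecewiseAffine (S : Finset ℝ) (φ : ℝ → ℝ) : Prop :=
  ∀ x y, x < y → (∀ s ∈ S, s ∉ Ioo x y) → AffineOn φ (Icc x y)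

theorem affine_coeffs_eq_of_agree_at_two {a c a' c' u v : ℝ} (huv : u ≠ v)
    (hu : a * u + c = a' * u + c') (hv : a * v + c = a' * v + c') : a = a' ∧ c = c' := by
  have ha : a = a' := by
    have : (a - a') * (u - v) = 0 := by linear_combination hu - hv
    simpa [sub_eq_zero, huv] using this
  exact ⟨ha, by subst ha; linarith⟩

theorem IsPiecewiseAffine.exists_eq_affine_of_empty {φ : ℝ → ℝ} (hφ : IsPiecewiseAffine ∅ φ) :
    ∃ a c : ℝ, φ = fun x => a * x + c := by
  obtain ⟨a, c, h⟩ := hφ 0 1 one_pos (by simp)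
  refine ⟨a, c, funext fun z => ?_⟩
  obtain ⟨a', c', h'⟩ := hφ (min z 0) (max z 1) (by linarith [min_le_right z 0, le_max_right z 1])
    (by simp)
  have mem : ∀ x, 0 ≤ x → x ≤ 1 → x ∈ Icc (min z 0) (max z 1) := fun x h0 h1 =>
    ⟨(min_le_right z 0).trans h0, h1.trans (le_max_right z 1)⟩
  obtain ⟨rfl, rfl⟩ := affine_coeffs_eq_of_agree_at_two zero_ne_one
    ((h 0 (by simp)).symm.trans (h' 0 (mem 0 le_rfl zero_le_one)))
    ((h 1 (by simp)).symm.trans (h' 1 (mem 1 zero_le_one le_rfl)))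
  exact h' z ⟨min_le_left z 0, le_max_left z 1⟩

theorem derivWithin_Iic_eq_of_eqOn {φ : ℝ → ℝ} {a c x s : ℝ} (hxs : x < s)
    (h : EqOn φ (fun z => a * z + c) (Icc x s)) : derivWithin φ (Iic s) s = a := by
  have hd : HasDerivWithinAt (fun z => a * z + c) a (Icc x s) s := by
    simpa using ((hasDerivAt_id s).const_mul a).add_const c |>.hasDerivWithinAt
  exact ((hd.congr_of_mem h ⟨hxs.le, le_rfl⟩).mono_of_mem_nhdsWithin
    (Icc_mem_nhdsLE hxs)).derivWithin (uniqueDiffWithinAt_Iic s)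

theorem derivWithin_Ici_eq_of_eqOn {φ : ℝ → ℝ} {a c s y : ℝ} (hsy : s < y)
    (h : EqOn φ (fun z => a * z + c) (Icc s y)) : derivWithin φ (Ici s) s = a := by
  have hd : HasDerivWithinAt (fun z => a * z + c) a (Icc s y) s := by
    simpa using ((hasDerivAt_id s).const_mul a).add_const c |>.hasDerivWithinAt
  exact ((hd.congr_of_mem h ⟨le_rfl, hsy.le⟩).mono_of_mem_nhdsWithin
    (Icc_mem_nhdsGE hsy)).derivWithin (uniqueDiffWithinAt_Ici s)

theorem IsPiecewiseAffine.sub_hinge {s : ℝ} {T : Finset ℝ} {φ : ℝ → ℝ}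
    (hφ : IsPiecewiseAffine (insert s T) φ) :
    IsPiecewiseAffine T fun x =>
      φ x - (derivWithin φ (Ici s) s - derivWithin φ (Iic s) s) * max (x - s) 0 := by
  set δ := derivWithin φ (Ici s) s - derivWithin φ (Iic s) s with hδ_def
  intro x y hxy hT
  simp only [AffineOn]
  by_cases hs : s ∈ Ioo x y
  · obtain ⟨a, c, hl⟩ := hφ x s hs.1 fun t ht ht' =>
      (Finset.mem_insert.1 ht).elim (fun h => ht'.2.ne h) fun h => hT t h ⟨ht'.1, ht'.2.trans hs.2⟩
    obtain ⟨a', c', hr⟩ := hφ s y hs.2 fun t ht ht' =>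
      (Finset.mem_insert.1 ht).elim (fun h => ht'.1.ne' h) fun h => hT t h ⟨hs.1.trans ht'.1, ht'.2⟩
    have hδ : δ = a' - a := by
      rw [hδ_def, derivWithin_Ici_eq_of_eqOn hs.2 hr, derivWithin_Iic_eq_of_eqOn hs.1 hl]
    have hcont : a * s + c = a' * s + c' :=
      (hl s ⟨hs.1.le, le_rfl⟩).symm.trans (hr s ⟨le_rfl, hs.2.le⟩)
    refine ⟨a, c, fun z hz => ?_⟩
    rcases le_total z s with hzs | hsz
    · rw [hl z ⟨hz.1, hzs⟩, max_eq_right (sub_nonpos.2 hzs)]; ring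
    · rw [hr z ⟨hsz, hz.2⟩, max_eq_left (sub_nonneg.2 hsz), hδ]; linear_combination -hcont
  · obtain ⟨a, c, h⟩ := hφ x y hxy fun t ht =>
      (Finset.mem_insert.1 ht).elim (fun h => h ▸ hs) (hT t)
    rcases le_or_gt y s with hys | hsy
    · refine ⟨a, c, fun z hz => ?_⟩
      rw [h z hz, max_eq_right (sub_nonpos.2 (hz.2.trans hys))]; ring
    · have hsx : s ≤ x := not_lt.1 fun hxs => hs ⟨hxs, hsy⟩
      refine ⟨a - δ, c + δ * s, fun z hz => ?_⟩
      rw [h z hz, max_eq_left (sub_nonneg.2 (hsx.trans hz.1))]; ring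

theorem IsPiecewiseAffine.isHingeSum {S : Finset ℝ} {φ : ℝ → ℝ} (hφ : IsPiecewiseAffine S φ) :
    IsHingeSum φ := by
  induction S using Finset.induction_on generalizing φ with
  | empty =>
    obtain ⟨a, c, rfl⟩ := hφ.exists_eq_affine_of_empty
    exact isHingeSum_affine a c
  | insert s T _ ih =>
    simpa using (ih hφ.sub_hinge).add_hinge
      (derivWithin φ (Ici s) s - derivWithin φ (Iic s) s) s

theorem IsPreconnected.exists_eqOn_of_continuous_selection {ι : Type*} [Finite ι]
    {I : Set ℝ} (hI : IsPreconnected I) {φ : ℝ → ℝ} {ℓ : ι → ℝ → ℝ} (hφ : Continuous φ)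
    (hℓ : ∀ i, Continuous (ℓ i)) (hsel : ∀ x, ∃ i, φ x = ℓ i x)
    (hcross : ∀ x ∈ I, ∀ i j, ℓ i x = ℓ j x → EqOn (ℓ i) (ℓ j) I) :
    ∃ i, EqOn φ (ℓ i) I := by
  rcases I.eq_empty_or_nonempty with rfl | ⟨x₀, hx₀⟩
  · exact ⟨(hsel 0).choose, by simp⟩
  obtain ⟨i₀, hi₀⟩ := hsel x₀
  let other : Set ℝ := ⋃ (j) (_ : ¬EqOn (ℓ j) (ℓ i₀) I), {x | φ x = ℓ j x}
  have hcover : I ⊆ {x | φ x = ℓ i₀ x} ∪ other := by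
    intro x hx
    obtain ⟨j, hj⟩ := hsel x
    by_cases hji : EqOn (ℓ j) (ℓ i₀) I
    · exact Or.inl (hj.trans (hji hx))
    · exact Or.inr (mem_biUnion hji hj)
  refine ⟨i₀, fun x hx => ?_⟩
  by_contra hne
  obtain ⟨y, hyI, hy₀, hy⟩ := isPreconnected_closed_iff.1 hI _ _
    (isClosed_eq hφ (hℓ i₀)) (isClosed_iUnion_of_finite fun j =>
      isClosed_iUnion_of_finite fun _ => isClosed_eq hφ (hℓ j))
    hcover ⟨x₀, hx₀, hi₀⟩ ⟨x, hx, (hcover hx).resolve_left hne⟩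
  obtain ⟨j, hji, hj⟩ := mem_iUnion₂.1 hy
  exact hji (hcross y hyI j i₀ (hj.symm.trans hy₀))

theorem PWL1.exists_isPiecewiseAffine {k : ℕ} {φ : ℝ → ℝ} (hφ : Continuous φ) (h : PWL1 k φ) :
    ∃ S : Finset ℝ, IsPiecewiseAffine S φ := by
  obtain ⟨P, hcov, haff⟩ := h
  choose a c haff using haff
  have hsel : ∀ x, ∃ i, φ x = a i * x + c i := fun x =>
    (hcov x).imp fun i hi => haff i x hi
  -- two distinct lines meet in at most one point, at `(c j - c i) / (a i - a j)`
  refine ⟨Finset.univ.image fun p : Fin k × Fin k => (c p.2 - c p.1) / (a p.1 - a p.2),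
    fun x y hxy hS => ?_⟩
  have hcross : ∀ z ∈ Ioo x y, ∀ i j, a i * z + c i = a j * z + c j →
      EqOn (fun z => a i * z + c i) (fun z => a j * z + c j) (Ioo x y) := by
    intro z hz i j hij
    have ha : a i = a j := by
      by_contra hne
      refine hS _ (Finset.mem_image_of_mem _ (Finset.mem_univ (i, j))) ?_
      rwa [show (c j - c i) / (a i - a j) = z by
        rw [div_eq_iff (sub_ne_zero.2 hne)]; linarith]
    intro w _
    simp only [ha, show c i = c j by rw [ha] at hij; linarith]
  obtain ⟨i, hi⟩ := isPreconnected_Ioo.exists_eqOn_of_continuous_selection hφ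
    (fun i => by fun_prop) hsel hcross
  refine ⟨a i, c i, ?_⟩
  rw [← closure_Ioo hxy.ne]
  exact hi.closure hφ (by fun_prop)

namespace IsReLUNet

theorem depth_pos {n m L : ℕ} {g : (Fin n → ℝ) → (Fin m → ℝ)} (hg : IsReLUNet n m g L) :
    0 < L := by
  cases hg <;> omega

theorem affine_comp {n m l L : ℕ} {g : (Fin n → ℝ) → (Fin m → ℝ)} (hg : IsReLUNet n m g L)
    (W : Matrix (Fin l) (Fin m) ℝ) (b : Fin l → ℝ) :
    IsReLUNet n l (fun x => W *ᵥ g x + b) L := by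
  cases hg with
  | affine W₀ b₀ =>
    convert affine (W * W₀) (W *ᵥ b₀ + b) using 2 with x
    rw [mulVec_add, mulVec_mulVec, add_assoc]
  | comp hf W₀ b₀ =>
    convert comp hf (W * W₀) (W *ᵥ b₀ + b) using 2 with x
    rw [mulVec_add, mulVec_mulVec, add_assoc]

theorem compose {n m l L₁ L₂ : ℕ} {f : (Fin n → ℝ) → (Fin m → ℝ)}
    {h : (Fin m → ℝ) → (Fin l → ℝ)} (hh : IsReLUNet m l h L₂) (hf : IsReLUNet n m f L₁) :
    IsReLUNet n l (h ∘ f) (L₁ + L₂ - 1) := by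
  induction hh with
  | affine W b =>
    rw [Nat.add_sub_cancel]
    exact hf.affine_comp W b
  | comp _ W b ih =>
    have := hf.depth_pos
    rw [show ∀ L, L₁ + (L + 1) - 1 = L₁ + L - 1 + 1 from fun L => by omega]
    exact ih.comp W b

theorem of_fintype_hidden {ι : Type*} [Fintype ι] {m l : ℕ} (W₁ : Matrix ι (Fin m) ℝ)
    (b₁ : ι → ℝ) (W₂ : Matrix (Fin l) ι ℝ) (b₂ : Fin l → ℝ) :
    IsReLUNet m l (fun y => W₂ *ᵥ (fun i => max ((W₁ *ᵥ y + b₁) i) 0) + b₂) 2 := by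
  let e := (Fintype.equivFin ι).symm
  convert comp (affine (W₁.submatrix e id) (b₁ ∘ e)) (W₂.submatrix id e) b₂ using 2 with y
  simp only [submatrix_mulVec_equiv]
  congr 2
  ext i
  simp [reluV, mulVec, dotProduct]

end IsReLUNet

theorem isReLUNet_kanLayer {n m : ℕ} {φ : Fin m → Fin n → ℝ → ℝ}
    (hφ : ∀ q p, IsHingeSum (φ q p)) : IsReLUNet n m (kanLayer φ) 2 := by
  choose N c w b d hφ using hφ
  -- one hidden neuron for each hinge of each activation function
  let ι := (q : Fin m) × (p : Fin n) × Fin (N q p)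
  convert IsReLUNet.of_fintype_hidden (ι := ι) (of fun i => Pi.single i.2.1 (w i.1 i.2.1 i.2.2))
    (fun i => b i.1 i.2.1 i.2.2) (of fun q i => if i.1 = q then d i.1 i.2.1 i.2.2 else 0)
    (fun q => ∑ p, c q p) using 1
  ext x q
  simp only [kanLayer, hφ, Finset.sum_add_distrib, Pi.add_apply, mulVec, of_apply,
    single_dotProduct, add_comm, add_right_inj]
  simp [dotProduct, Fintype.sum_sigma, ι]

theorem IsKAN.isReLUNet {Q : (ℝ → ℝ) → Prop} {n m L : ℕ} {f : (Fin n → ℝ) → (Fin m → ℝ)}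
    (hf : IsKAN Q n m f L) (hQ : ∀ φ, Q φ → IsHingeSum φ) : IsReLUNet n m f (L + 1) := by
  induction hf with
  | layer φ h => exact isReLUNet_kanLayer fun q p => hQ _ (h q p)
  | comp _ φ h ih => exact (isReLUNet_kanLayer fun q p => hQ _ (h q p)).compose ih

/-- every piecewise linear KAN f : ℝⁿ → ℝ (all activation functions continuous
piecewise linear with finitely many pieces) equals some ReLU network. -/
theorem stmt8 (n : ℕ) (f : (Fin n → ℝ) → (Fin 1 → ℝ)) (L : ℕ)
    (hf : IsKAN (fun φ => Continuous φ ∧ ∃ k, PWL1 k φ) n 1 f L) :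
    ∃ (L' : ℕ) (g : (Fin n → ℝ) → (Fin 1 → ℝ)),
      IsReLUNet n 1 g L' ∧ ∀ x, f x = g x :=
  ⟨L + 1, f, hf.isReLUNet fun _ ⟨hc, _, hk⟩ =>
    (hk.exists_isPiecewiseAffine hc).choose_spec.isHingeSum, fun _ => rfl⟩
end

section
/- Every continuous piecewise linear function ψ: ℝⁿ → ℝ with finitely many pieces can be exactly represented by a piecewise linear KAN (a composition of finitely many KAN layers with continuous piecewise linear activation functions). -/
/-- A scalar-valued function on ℝⁿ is piecewise linear with at most k pieces. -/
def PWLs (n k : ℕ) (f : (Fin n → ℝ) → ℝ) : Prop :=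
  ∃ P : Fin k → Set (Fin n → ℝ), (∀ x, ∃ i, x ∈ P i) ∧
    ∀ i, ∃ (A : Fin n → ℝ) (c : ℝ), ∀ x ∈ P i, f x = (∑ j, A j * x j) + c

def QP : (ℝ → ℝ) → Prop := fun φ => Continuous φ ∧ ∃ k, PWL1 k φ

lemma QP_aff (a c : ℝ) : QP (fun t => a * t + c) := by
  refine ⟨by continuity, 1, ⟨fun _ => Set.univ, fun x => ⟨0, trivial⟩, fun i => ⟨a, c, fun x _ => rfl⟩⟩⟩

lemma QP_scale (M : ℝ) {u : ℝ → ℝ} (hu : QP u) : QP (fun t => M * u t) := by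
  obtain ⟨hc, k, P, hcov, haff⟩ := hu
  refine ⟨by continuity, k, P, hcov, fun i => ?_⟩
  obtain ⟨a, c, h⟩ := haff i
  exact ⟨M * a, M * c, fun x hx => by show M * u x = _; rw [h x hx]; ring⟩

lemma QP_id : QP (fun t => t) := by
  have := QP_aff 1 0
  simpa using this

lemma QP_nrelu : QP (fun t => min t 0) := by
  refine ⟨continuous_id.min continuous_const, 2, ⟨![{t | t ≤ 0}, {t | 0 ≤ t}], fun x => ?_, fun i => ?_⟩⟩
  · rcases le_total x 0 with h | h
    · exact ⟨0, h⟩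
    · exact ⟨1, h⟩
  · fin_cases i
    · exact ⟨1, 0, fun x hx => by simp at hx; simp [min_eq_left hx]⟩
    · exact ⟨0, 0, fun x hx => by simp at hx; simp [min_eq_right hx]⟩

lemma QP_relu : QP (fun t => max t 0) := by
  refine ⟨continuous_id.max continuous_const, 2, ⟨![{t | t ≤ 0}, {t | 0 ≤ t}], fun x => ?_, fun i => ?_⟩⟩
  · rcases le_total x 0 with h | h
    · exact ⟨0, h⟩
    · exact ⟨1, h⟩
  · fin_cases i
    · exact ⟨0, 0, fun x hx => by simp at hx; simp [max_eq_right hx]⟩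
    · exact ⟨1, 0, fun x hx => by simp at hx; simp [max_eq_left hx]⟩

lemma sum_pick1 {w : ℕ} (g : Fin w → ℝ) (p₀ : Fin w) :
    (∑ p, (if p = p₀ then (1:ℝ) else 0) * g p) = g p₀ := by
  simp [ite_mul, Finset.sum_ite_eq']

lemma sum_pick2 {w : ℕ} (g : Fin w → ℝ) (p₁ p₂ : Fin w) (hne : p₁ ≠ p₂) (α β : ℝ) :
    (∑ p, (if p = p₁ then α else if p = p₂ then β else 0) * g p) = α * g p₁ + β * g p₂ := by
  have h : ∀ p : Fin w, (if p = p₁ then α else if p = p₂ then β else 0) * g p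
      = (if p = p₁ then α * g p else 0) + (if p = p₂ then β * g p else 0) := by
    intro p
    by_cases h1 : p = p₁
    · subst h1; simp [hne]
    · by_cases h2 : p = p₂
      · subst h2; simp [h1]
      · simp [h1, h2]
  rw [Finset.sum_congr rfl (fun p _ => h p), Finset.sum_add_distrib]
  simp [Finset.sum_ite_eq']

/-- generic layer: matrix times unary activations -/
def glay {mi mo : ℕ} (M : Fin mo → Fin mi → ℝ) (u : Fin mi → ℝ → ℝ) :
    Fin mo → Fin mi → ℝ → ℝ := fun q p t => M q p * u p t

lemma glay_Q {mi mo : ℕ} (M : Fin mo → Fin mi → ℝ) (u : Fin mi → ℝ → ℝ)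
    (hu : ∀ p, QP (u p)) : ∀ q p, QP (glay M u q p) :=
  fun q p => QP_scale (M q p) (hu p)

lemma glay_apply {mi mo : ℕ} (M : Fin mo → Fin mi → ℝ) (u : Fin mi → ℝ → ℝ)
    (s : Fin mi → ℝ) (q : Fin mo) :
    kanLayer (glay M u) s q = ∑ p, M q p * u p (s p) := rfl

section Ops
variable {n k : ℕ}

/-- slot for value j -/
def vIdx (k : ℕ) (j : Fin k) : Fin (k+2) := ⟨j.val, by omega⟩
def aIdx (k : ℕ) : Fin (k+2) := ⟨k, by omega⟩
def bIdx (k : ℕ) : Fin (k+2) := ⟨k+1, by omega⟩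

lemma vIdx_ne_a (j : Fin k) : vIdx k j ≠ aIdx k := by
  simp [vIdx, aIdx, Fin.ext_iff]; omega
lemma vIdx_ne_b (j : Fin k) : vIdx k j ≠ bIdx k := by
  simp [vIdx, bIdx, Fin.ext_iff]; omega
lemma a_ne_b : aIdx k ≠ bIdx k := by simp [aIdx, bIdx, Fin.ext_iff]

def copyM (w : ℕ) (dst src : Fin w) : Fin w → Fin w → ℝ :=
  fun q p => if q = dst then (if p = src then 1 else 0) else (if p = q then 1 else 0)

def diffM (w : ℕ) (dst src : Fin w) : Fin w → Fin w → ℝ :=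
  fun q p => if q = dst then (if p = dst then 1 else if p = src then -1 else 0)
             else (if p = q then 1 else 0)

def mixM (w : ℕ) (dst src : Fin w) : Fin w → Fin w → ℝ :=
  fun q p => if q = dst then (if p = dst then 1 else if p = src then 1 else 0)
             else (if p = q then 1 else 0)

def uAt (w : ℕ) (dst : Fin w) (act : ℝ → ℝ) : Fin w → ℝ → ℝ :=
  fun p => if p = dst then act else fun t => t

lemma copy_layer {w : ℕ} (dst src : Fin w) (s : Fin w → ℝ) (q : Fin w) :
    kanLayer (glay (copyM w dst src) (fun _ t => t)) s q = if q = dst then s src else s q := by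
  rw [glay_apply]
  by_cases hq : q = dst <;> simp only [copyM, hq, if_true, if_false, ite_true, ite_false]
  · rw [sum_pick1 (fun p => s p) src]
  · rw [sum_pick1 (fun p => s p) q]

lemma diff_layer {w : ℕ} (dst src : Fin w) (hne : dst ≠ src) (s : Fin w → ℝ) (q : Fin w) :
    kanLayer (glay (diffM w dst src) (fun _ t => t)) s q
      = if q = dst then s dst - s src else s q := by
  rw [glay_apply]
  by_cases hq : q = dst <;> simp only [diffM, hq, if_true, if_false, ite_true, ite_false]
  · rw [sum_pick2 (fun p => s p) dst src hne 1 (-1)]; ring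
  · rw [sum_pick1 (fun p => s p) q]

lemma mix_layer {w : ℕ} (dst src : Fin w) (hne : dst ≠ src) (act : ℝ → ℝ) (s : Fin w → ℝ)
    (q : Fin w) :
    kanLayer (glay (mixM w dst src) (uAt w dst act)) s q
      = if q = dst then act (s dst) + s src else s q := by
  rw [glay_apply]
  by_cases hq : q = dst <;> simp only [mixM, hq, if_true, if_false, ite_true, ite_false]
  · rw [sum_pick2 (fun p => uAt w dst act p (s p)) dst src hne 1 1]
    simp [uAt, hne.symm]
  · rw [sum_pick1 (fun p => uAt w dst act p (s p)) q]
    simp [uAt, hq]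
end Ops

section OpLemmas
variable {n w L : ℕ} {F : (Fin n → ℝ) → (Fin w → ℝ)}

lemma op_copy (hF : IsKAN QP n w F L) (dst src : Fin w) :
    ∃ F', IsKAN QP n w F' (L+1) ∧
      ∀ x, (∀ i, i ≠ dst → F' x i = F x i) ∧ F' x dst = F x src := by
  refine ⟨fun x => kanLayer (glay (copyM w dst src) (fun _ t => t)) (F x),
    IsKAN.comp hF _ (glay_Q _ _ fun p => QP_id), fun x => ⟨fun i hi => ?_, ?_⟩⟩
  · show kanLayer (glay (copyM w dst src) (fun _ t => t)) (F x) i = F x i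
    rw [copy_layer]; simp [hi]
  · show kanLayer (glay (copyM w dst src) (fun _ t => t)) (F x) dst = F x src
    rw [copy_layer]; simp

lemma op_min (hF : IsKAN QP n w F L) (dst src : Fin w) (hne : dst ≠ src) :
    ∃ F', IsKAN QP n w F' (L+2) ∧
      ∀ x, (∀ i, i ≠ dst → F' x i = F x i) ∧ F' x dst = min (F x dst) (F x src) := by
  have h1 := IsKAN.comp hF (glay (diffM w dst src) (fun _ t => t))
    (glay_Q _ _ fun p => QP_id)
  refine ⟨fun x => kanLayer (glay (mixM w dst src) (uAt w dst (fun t => min t 0)))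
      ((fun x => kanLayer (glay (diffM w dst src) (fun _ t => t)) (F x)) x),
    IsKAN.comp h1 _ (glay_Q _ _ fun p => ?_), fun x => ⟨fun i hi => ?_, ?_⟩⟩
  · by_cases hp : p = dst <;> simp [uAt, hp]
    · exact QP_nrelu
    · exact QP_id
  · show kanLayer (glay (mixM w dst src) (uAt w dst (fun t => min t 0)))
        (kanLayer (glay (diffM w dst src) (fun _ t => t)) (F x)) i = F x i
    rw [mix_layer _ _ hne]
    simp only [hi, if_false]
    rw [diff_layer _ _ hne]
    simp [hi]
  · show kanLayer (glay (mixM w dst src) (uAt w dst (fun t => min t 0)))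
        (kanLayer (glay (diffM w dst src) (fun _ t => t)) (F x)) dst = min (F x dst) (F x src)
    rw [mix_layer _ _ hne]
    simp only [if_true, ite_true]
    rw [diff_layer _ _ hne, diff_layer _ _ hne]
    simp only [if_true, ite_true, hne.symm, if_false, ite_false]
    rcases le_total (F x dst) (F x src) with h | h
    · rw [min_eq_left (by linarith : F x dst - F x src ≤ 0), min_eq_left h]; ring
    · rw [min_eq_right (by linarith : (0:ℝ) ≤ F x dst - F x src), min_eq_right h]; ring

lemma op_max (hF : IsKAN QP n w F L) (dst src : Fin w) (hne : dst ≠ src) :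
    ∃ F', IsKAN QP n w F' (L+2) ∧
      ∀ x, (∀ i, i ≠ dst → F' x i = F x i) ∧ F' x dst = max (F x dst) (F x src) := by
  have h1 := IsKAN.comp hF (glay (diffM w dst src) (fun _ t => t))
    (glay_Q _ _ fun p => QP_id)
  refine ⟨fun x => kanLayer (glay (mixM w dst src) (uAt w dst (fun t => max t 0)))
      ((fun x => kanLayer (glay (diffM w dst src) (fun _ t => t)) (F x)) x),
    IsKAN.comp h1 _ (glay_Q _ _ fun p => ?_), fun x => ⟨fun i hi => ?_, ?_⟩⟩
  · by_cases hp : p = dst <;> simp [uAt, hp]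
    · exact QP_relu
    · exact QP_id
  · show kanLayer (glay (mixM w dst src) (uAt w dst (fun t => max t 0)))
        (kanLayer (glay (diffM w dst src) (fun _ t => t)) (F x)) i = F x i
    rw [mix_layer _ _ hne]
    simp only [hi, if_false]
    rw [diff_layer _ _ hne]
    simp [hi]
  · show kanLayer (glay (mixM w dst src) (uAt w dst (fun t => max t 0)))
        (kanLayer (glay (diffM w dst src) (fun _ t => t)) (F x)) dst = max (F x dst) (F x src)
    rw [mix_layer _ _ hne]
    simp only [if_true, ite_true]
    rw [diff_layer _ _ hne, diff_layer _ _ hne]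
    simp only [if_true, ite_true, hne.symm, if_false, ite_false]
    rcases le_total (F x dst) (F x src) with h | h
    · rw [max_eq_right (by linarith : F x dst - F x src ≤ 0), max_eq_right h]; ring
    · rw [max_eq_left (by linarith : (0:ℝ) ≤ F x dst - F x src), max_eq_left h]; ring

end OpLemmas

/-- affine layer with constants -/
def affL {ni no : ℕ} (A : Fin no → Fin ni → ℝ) (c : Fin no → ℝ) (p₀ : Fin ni) :
    Fin no → Fin ni → ℝ → ℝ := fun q p t => A q p * t + (if p = p₀ then c q else 0)

lemma affL_Q {ni no : ℕ} (A : Fin no → Fin ni → ℝ) (c : Fin no → ℝ) (p₀ : Fin ni) :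
    ∀ q p, QP (affL A c p₀ q p) := fun q p => QP_aff (A q p) _

lemma affL_apply {ni no : ℕ} (A : Fin no → Fin ni → ℝ) (c : Fin no → ℝ) (p₀ : Fin ni)
    (x : Fin ni → ℝ) (q : Fin no) :
    kanLayer (affL A c p₀) x q = (∑ p, A q p * x p) + c q := by
  unfold kanLayer affL
  rw [Finset.sum_add_distrib]
  congr 1
  rw [Finset.sum_ite_eq' Finset.univ p₀ (fun _ => c q)]
  simp

section Driver
variable {n k : ℕ} (A : Fin k → Fin n → ℝ) (c : Fin k → ℝ)

def lv (A : Fin k → Fin n → ℝ) (c : Fin k → ℝ) (j : Fin k) (x : Fin n → ℝ) : ℝ :=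
  (∑ i, A j i * x i) + c j

lemma init_kan : ∃ G L, IsKAN QP n (k+2) G L ∧ ∀ x j, G x (vIdx k j) = lv A c j x := by
  cases n with
  | zero =>
    refine ⟨fun x => kanLayer (affL (fun _ (_ : Fin 1) => (0:ℝ))
        (fun q => if h : q.val < k then c ⟨q.val, h⟩ else 0) 0)
        (kanLayer (fun (_ : Fin 1) (p : Fin 0) => p.elim0) x), 1 + 1,
        IsKAN.comp (IsKAN.layer _ (fun q p => p.elim0)) _ (affL_Q _ _ _), ?_⟩
    · intro x j
      beta_reduce
      rw [affL_apply]
      have hj : (vIdx k j).val < k := j.isLt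
      simp only [hj, dif_pos]
      have : (⟨(vIdx k j).val, hj⟩ : Fin k) = j := rfl
      rw [this]
      simp [lv]
  | succ m =>
    refine ⟨kanLayer (affL (fun q => if h : q.val < k then A ⟨q.val, h⟩ else fun _ => 0)
        (fun q => if h : q.val < k then c ⟨q.val, h⟩ else 0) 0), 1,
        IsKAN.layer _ (affL_Q _ _ _), ?_⟩
    · intro x j
      rw [affL_apply]
      have hj : (vIdx k j).val < k := j.isLt
      simp only [hj, dif_pos]
      have h1 : (⟨(vIdx k j).val, hj⟩ : Fin k) = j := rfl
      rw [h1]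
      rfl

def minOf (A : Fin k → Fin n → ℝ) (c : Fin k → ℝ) (s : Fin k × List (Fin k))
    (x : Fin n → ℝ) : ℝ :=
  s.2.foldl (fun acc j => min acc (lv A c j x)) (lv A c s.1 x)

lemma minrun (js : List (Fin k)) :
    ∀ {F : (Fin n → ℝ) → (Fin (k+2) → ℝ)} {L}, IsKAN QP n (k+2) F L →
    (∀ x j, F x (vIdx k j) = lv A c j x) →
    ∃ F' L', IsKAN QP n (k+2) F' L' ∧ (∀ x j, F' x (vIdx k j) = lv A c j x) ∧
      (∀ x, F' x (bIdx k) = F x (bIdx k)) ∧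
      (∀ x, F' x (aIdx k) = js.foldl (fun acc j => min acc (lv A c j x)) (F x (aIdx k))) := by
  induction js with
  | nil => exact fun {F L} hF hinv => ⟨F, L, hF, hinv, fun x => rfl, fun x => rfl⟩
  | cons j js ih =>
    intro F L hF hinv
    obtain ⟨F₁, h1, hv⟩ := op_min hF (aIdx k) (vIdx k j) (vIdx_ne_a j).symm
    have hinv₁ : ∀ x j', F₁ x (vIdx k j') = lv A c j' x := fun x j' => by
      rw [(hv x).1 _ (vIdx_ne_a j'), hinv]
    obtain ⟨F', L', hK, hi', hb', ha'⟩ := ih h1 hinv₁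
    refine ⟨F', L', hK, hi', ?_, ?_⟩
    · intro x
      rw [hb' x, (hv x).1 _ a_ne_b.symm]
    · intro x
      rw [ha' x, (hv x).2, hinv]
      rfl

lemma maxrun (SS : List (Fin k × List (Fin k))) :
    ∀ {F : (Fin n → ℝ) → (Fin (k+2) → ℝ)} {L}, IsKAN QP n (k+2) F L →
    (∀ x j, F x (vIdx k j) = lv A c j x) →
    ∃ F' L', IsKAN QP n (k+2) F' L' ∧ (∀ x j, F' x (vIdx k j) = lv A c j x) ∧
      (∀ x, F' x (bIdx k) =
        SS.foldl (fun acc s => max acc (minOf A c s x)) (F x (bIdx k))) := by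
  induction SS with
  | nil => exact fun {F L} hF hinv => ⟨F, L, hF, hinv, fun x => rfl⟩
  | cons s SS ih =>
    intro F L hF hinv
    obtain ⟨F₁, h1, hv1⟩ := op_copy hF (aIdx k) (vIdx k s.1)
    have hinv₁ : ∀ x j', F₁ x (vIdx k j') = lv A c j' x := fun x j' => by
      rw [(hv1 x).1 _ (vIdx_ne_a j'), hinv]
    obtain ⟨F₂, L₂, h2, hinv₂, hb₂, ha₂⟩ := minrun A c s.2 h1 hinv₁
    obtain ⟨F₃, h3, hv3⟩ := op_max h2 (bIdx k) (aIdx k) a_ne_b.symm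
    have hinv₃ : ∀ x j', F₃ x (vIdx k j') = lv A c j' x := fun x j' => by
      rw [(hv3 x).1 _ (vIdx_ne_b j'), hinv₂]
    obtain ⟨F', L', hK, hi', hb'⟩ := ih h3 hinv₃
    refine ⟨F', L', hK, hi', ?_⟩
    intro x
    rw [hb' x, (hv3 x).2, hb₂ x, (hv1 x).1 _ a_ne_b.symm, ha₂ x, (hv1 x).2, hinv]
    rfl

lemma kan_rep (s₀ : Fin k × List (Fin k)) (SS : List (Fin k × List (Fin k))) :
    ∃ L f, IsKAN QP n 1 f L ∧ ∀ x, f x 0 =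
      SS.foldl (fun acc s => max acc (minOf A c s x)) (minOf A c s₀ x) := by
  obtain ⟨G, L₀, hG, hGv⟩ := init_kan A c
  obtain ⟨F₁, h1, hv1⟩ := op_copy hG (aIdx k) (vIdx k s₀.1)
  have hinv₁ : ∀ x j', F₁ x (vIdx k j') = lv A c j' x := fun x j' => by
    rw [(hv1 x).1 _ (vIdx_ne_a j'), hGv]
  obtain ⟨F₂, L₂, h2, hinv₂, hb₂, ha₂⟩ := minrun A c s₀.2 h1 hinv₁
  obtain ⟨F₃, h3, hv3⟩ := op_copy h2 (bIdx k) (aIdx k)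
  have hinv₃ : ∀ x j', F₃ x (vIdx k j') = lv A c j' x := fun x j' => by
    rw [(hv3 x).1 _ (vIdx_ne_b j'), hinv₂]
  obtain ⟨F₄, L₄, h4, hinv₄, hb₄⟩ := maxrun A c SS h3 hinv₃
  refine ⟨L₄ + 1, fun x => kanLayer (glay (fun (_ : Fin 1) p => if p = bIdx k then (1:ℝ) else 0)
      (fun _ t => t)) (F₄ x), IsKAN.comp h4 _ (glay_Q _ _ fun p => QP_id), ?_⟩
  intro x
  show kanLayer (glay (fun (_ : Fin 1) p => if p = bIdx k then (1:ℝ) else 0)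
      (fun _ t => t)) (F₄ x) 0 = _
  rw [glay_apply]
  rw [sum_pick1 (fun p => F₄ x p) (bIdx k)]
  rw [hb₄ x, (hv3 x).2, ha₂ x, (hv1 x).2, hGv]
  rfl

end Driver

section Folds
variable {ι : Type*} (g : ι → ℝ)

lemma foldlMin_le_init (l : List ι) : ∀ a : ℝ, l.foldl (fun acc j => min acc (g j)) a ≤ a := by
  induction l with
  | nil => intro a; simp
  | cons b l ih => intro a; exact le_trans (ih _) (min_le_left _ _)

lemma foldlMin_le_mem (l : List ι) : ∀ a : ℝ, ∀ b ∈ l, l.foldl (fun acc j => min acc (g j)) a ≤ g b := by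
  induction l with
  | nil => intro a b hb; simp at hb
  | cons x l ih =>
    intro a b hb
    rcases List.mem_cons.mp hb with h | h
    · subst h
      exact le_trans (foldlMin_le_init g l _) (min_le_right _ _)
    · exact ih _ b h

lemma le_foldlMin (l : List ι) : ∀ a c : ℝ, c ≤ a → (∀ b ∈ l, c ≤ g b) →
    c ≤ l.foldl (fun acc j => min acc (g j)) a := by
  induction l with
  | nil => intro a c h _; simpa using h
  | cons x l ih =>
    intro a c h hl
    exact ih _ c (le_min h (hl x (List.mem_cons_self (a := x) (l := l)))) (fun b hb => hl b (List.mem_cons_of_mem _ hb))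

lemma init_le_foldlMax (l : List ι) : ∀ a : ℝ, a ≤ l.foldl (fun acc j => max acc (g j)) a := by
  induction l with
  | nil => intro a; simp
  | cons b l ih => intro a; exact le_trans (le_max_left _ _) (ih _)

lemma mem_le_foldlMax (l : List ι) : ∀ a : ℝ, ∀ b ∈ l, g b ≤ l.foldl (fun acc j => max acc (g j)) a := by
  induction l with
  | nil => intro a b hb; simp at hb
  | cons x l ih =>
    intro a b hb
    rcases List.mem_cons.mp hb with h | h
    · subst h
      exact le_trans (le_max_right _ _) (init_le_foldlMax g l _)
    · exact ih _ b h

lemma foldlMax_le (l : List ι) : ∀ a c : ℝ, a ≤ c → (∀ b ∈ l, g b ≤ c) →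
    l.foldl (fun acc j => max acc (g j)) a ≤ c := by
  induction l with
  | nil => intro a c h _; simpa using h
  | cons x l ih =>
    intro a c h hl
    exact ih _ c (max_le h (hl x (List.mem_cons_self (a := x) (l := l)))) (fun b hb => hl b (List.mem_cons_of_mem _ hb))

end Folds

/-- 1-D two-point lemma: a continuous selection of finitely many affine functions on [0,1]
admits a component above it at 0 and below it at 1. -/
lemma tpl1 {k : ℕ} (hk : 0 < k) (α β : Fin k → ℝ) (g : ℝ → ℝ) (hg : Continuous g)
    (hsel : ∀ t ∈ Set.Icc (0:ℝ) 1, ∃ j, g t = α j * t + β j) :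
    ∃ j, g 0 ≤ β j ∧ α j * 1 + β j ≤ g 1 := by
  set m : Fin k → ℝ → ℝ := fun j t => α j * t + β j with hm
  have hmc : ∀ j, Continuous (m j) := fun j => by continuity
  set T : Set ℝ := Set.Icc (0:ℝ) 1 ∩ ⋃ j, {t | g 0 ≤ m j 0 ∧ m j t ≤ g t} with hT
  have h0T : (0:ℝ) ∈ T := by
    obtain ⟨j, hj⟩ := hsel 0 ⟨le_refl _, zero_le_one⟩
    exact ⟨⟨le_refl _, zero_le_one⟩, Set.mem_iUnion.mpr ⟨j, le_of_eq hj, le_of_eq hj.symm⟩⟩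
  have hbdd : BddAbove T := ⟨1, fun t ht => ht.1.2⟩
  have hclosed : IsClosed T := by
    apply IsClosed.inter isClosed_Icc
    apply isClosed_iUnion_of_finite
    intro j
    by_cases hj : g 0 ≤ m j 0
    · have : {t | g 0 ≤ m j 0 ∧ m j t ≤ g t} = {t | m j t ≤ g t} := by
        ext t; simp [hj]
      rw [this]
      exact isClosed_le (hmc j) hg
    · have : {t | g 0 ≤ m j 0 ∧ m j t ≤ g t} = ∅ := by
        ext t; simp [hj]
      rw [this]; exact isClosed_empty
  set τ := sSup T with hτ
  have hτT : τ ∈ T := hclosed.csSup_mem ⟨0, h0T⟩ hbdd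
  have hτ0 : 0 ≤ τ := hτT.1.1
  have hτ1 : τ ≤ 1 := hτT.1.2
  obtain ⟨-, hU⟩ := hτT
  obtain ⟨j₀, hj₀0, hj₀τ⟩ := Set.mem_iUnion.mp hU
  by_cases hlt : τ < 1
  · -- derive a contradiction
    exfalso
    -- K1 : beyond τ, no admissible line is below g
    have K1 : ∀ t, τ < t → t ≤ 1 → ∀ j, g 0 ≤ m j 0 → g t < m j t := by
      intro t ht1 ht2 j hj
      by_contra hcon
      push_neg at hcon
      have : t ∈ T := ⟨⟨le_trans hτ0 (le_of_lt ht1), ht2⟩, Set.mem_iUnion.mpr ⟨j, hj, hcon⟩⟩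
      exact absurd (le_csSup hbdd this) (not_le.mpr ht1)
    -- Step 1 : m j₀ τ = g τ
    have step1 : m j₀ τ = g τ := by
      rcases lt_or_eq_of_le hj₀τ with hlt2 | he
      · exfalso
        have hc : ContinuousAt (fun t => g t - m j₀ t) τ := (hg.sub (hmc j₀)).continuousAt
        rw [Metric.continuousAt_iff] at hc
        obtain ⟨δ, hδ, hball⟩ := hc (g τ - m j₀ τ) (by linarith)
        set t' := min (τ + δ/2) 1 with ht'
        have ht'1 : τ < t' := lt_min (by linarith) hlt
        have ht'2 : t' ≤ 1 := min_le_right _ _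
        have hdist : dist t' τ < δ := by
          rw [Real.dist_eq, abs_of_nonneg (by linarith : (0:ℝ) ≤ t' - τ)]
          have : t' ≤ τ + δ/2 := min_le_left _ _
          linarith
        have := hball hdist
        rw [Real.dist_eq] at this
        have h2 : m j₀ t' < g t' := by
          rcases abs_lt.mp this with ⟨h3, h4⟩
          linarith
        exact absurd (K1 t' ht'1 ht'2 j₀ hj₀0) (not_lt.mpr (le_of_lt h2))
      · exact he
    -- Step 2 : find a component active just to the right of τ
    have step2 : ∃ u : Fin k, ∀ δ : ℝ, 0 < δ → ∃ t, τ < t ∧ t ≤ 1 ∧ t ≤ τ + δ ∧ g t = m u t := by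
      by_contra hall
      push_neg at hall
      choose δf hδf hno using hall
      have hne : (Finset.univ : Finset (Fin k)).Nonempty := Finset.univ_nonempty_iff.mpr ⟨⟨0, hk⟩⟩
      set δm := Finset.univ.inf' hne δf with hδm
      have hδm0 : 0 < δm := (Finset.lt_inf'_iff hne).mpr (fun j _ => hδf j)
      set tst := min (τ + δm/2) 1 with htst
      have h1 : τ < tst := lt_min (by linarith) hlt
      have h2 : tst ≤ 1 := min_le_right _ _
      have h3 : (0:ℝ) ≤ tst := le_trans hτ0 (le_of_lt h1)
      obtain ⟨j, hj⟩ := hsel tst ⟨h3, h2⟩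
      have h4 : tst ≤ τ + δf j := by
        have h5 : δm ≤ δf j := Finset.inf'_le _ (Finset.mem_univ j)
        have h6 : tst ≤ τ + δm/2 := min_le_left _ _
        linarith
      exact hno j tst h1 h2 h4 hj
    obtain ⟨u, hu⟩ := step2
    -- Step 3 : m u τ = g τ
    have step3 : m u τ = g τ := by
      by_contra hne
      have hc : ContinuousAt (fun t => g t - m u t) τ := (hg.sub (hmc u)).continuousAt
      rw [Metric.continuousAt_iff] at hc
      have habs : 0 < |g τ - m u τ| := abs_pos.mpr (fun h => hne (by linarith))
      obtain ⟨δ, hδ, hball⟩ := hc _ habs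
      obtain ⟨t, ht1, ht2, ht3, ht4⟩ := hu (δ/2) (by linarith)
      have hdist : dist t τ < δ := by
        rw [Real.dist_eq, abs_of_nonneg (by linarith : (0:ℝ) ≤ t - τ)]
        linarith
      have := hball hdist
      rw [Real.dist_eq] at this
      rw [ht4] at this
      simp at this
      rw [abs_sub_comm] at this
      exact absurd this (lt_irrefl _)
    -- Step 4 : a witness point strictly beyond τ where m u is active
    obtain ⟨t', ht'1, ht'2, -, ht'4⟩ := hu 1 one_pos
    -- Step 5 : m u 0 < g 0
    have step5 : m u 0 < g 0 := by
      by_contra hcon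
      push_neg at hcon
      have := K1 t' ht'1 ht'2 u hcon
      rw [ht'4] at this
      exact absurd this (lt_irrefl _)
    -- Step 6 : τ > 0
    have hτpos : 0 < τ := by
      rcases lt_or_eq_of_le hτ0 with h | h
      · exact h
      · exfalso
        rw [← h] at step3
        rw [step3] at step5
        exact absurd step5 (lt_irrefl _)
    -- Step 7 : algebra / contradiction
    have e1 : α u * τ + β u = g τ := step3
    have e2 : α j₀ * τ + β j₀ = g τ := step1
    have hβ : β u < β j₀ := by
      have h1 : m u 0 = β u := by simp [hm]
      have h2 : m j₀ 0 = β j₀ := by simp [hm]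
      rw [h1] at step5
      rw [h2] at hj₀0
      linarith
    have h7 : α u * τ - α j₀ * τ = β j₀ - β u := by linarith
    have hα : α j₀ < α u := by nlinarith
    have hfin : g t' < m j₀ t' := K1 t' ht'1 ht'2 j₀ hj₀0
    have hgt' : g t' = α u * t' + β u := ht'4
    have hmj : m j₀ t' = α j₀ * t' + β j₀ := rfl
    rw [hmj, hgt'] at hfin
    nlinarith [mul_pos (sub_pos.mpr hα) (sub_pos.mpr ht'1)]
  · -- τ = 1
    have hτeq : τ = 1 := le_antisymm hτ1 (not_lt.mp hlt)
    rw [hτeq] at hj₀τ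
    refine ⟨j₀, by simpa [hm] using hj₀0, by simpa [hm] using hj₀τ⟩

/-- two-point lemma in ℝⁿ -/
lemma tplN {n k : ℕ} (hk : 0 < k) (A : Fin k → Fin n → ℝ) (c : Fin k → ℝ)
    (ψ : (Fin n → ℝ) → ℝ) (hcont : Continuous ψ)
    (hact : ∀ z, ∃ j, ψ z = lv A c j z) (x y : Fin n → ℝ) :
    ∃ j, ψ x ≤ lv A c j x ∧ lv A c j y ≤ ψ y := by
  set γ : ℝ → (Fin n → ℝ) := fun t i => x i + t * (y i - x i) with hγ
  have hγc : Continuous γ := by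
    apply continuous_pi
    intro i
    continuity
  set α : Fin k → ℝ := fun j => ∑ i, A j i * (y i - x i) with hα
  set β : Fin k → ℝ := fun j => lv A c j x with hβ
  have haffine : ∀ j t, lv A c j (γ t) = α j * t + β j := by
    intro j t
    simp only [lv, hγ, hα, hβ]
    rw [Finset.sum_mul]
    have : ∀ i ∈ Finset.univ, A j i * (x i + t * (y i - x i))
        = A j i * (y i - x i) * t + A j i * x i := fun i _ => by ring
    rw [Finset.sum_congr rfl this, Finset.sum_add_distrib]
    ring
  have hγ0 : γ 0 = x := by funext i; simp [hγ]
  have hγ1 : γ 1 = y := by funext i; simp [hγ]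
  obtain ⟨j, hj0, hj1⟩ := tpl1 hk α β (fun t => ψ (γ t)) (hcont.comp hγc)
    (fun t _ => by obtain ⟨j, hj⟩ := hact (γ t); exact ⟨j, by show ψ (γ t) = _; rw [hj, haffine]⟩)
  refine ⟨j, ?_, ?_⟩
  · rw [hγ0] at hj0
    exact le_trans hj0 (le_of_eq rfl)
  · rw [hγ1] at hj1
    calc lv A c j y = α j * 1 + β j := by rw [← haffine j 1, hγ1]
    _ ≤ ψ y := hj1

lemma rep {n : ℕ} (ψ : (Fin n → ℝ) → ℝ) (hcont : Continuous ψ) (hpwl : ∃ k, PWLs n k ψ) :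
    ∃ (k : ℕ), 0 < k ∧ ∃ (A : Fin k → Fin n → ℝ) (c : Fin k → ℝ)
      (s₀ : Fin k × List (Fin k)) (SS : List (Fin k × List (Fin k))),
      ∀ x, ψ x = SS.foldl (fun acc s => max acc (minOf A c s x)) (minOf A c s₀ x) := by
  classical
  obtain ⟨k, P, hcov, haff⟩ := hpwl
  choose A c hAc using haff
  have hact : ∀ z, ∃ j, ψ z = lv A c j z := fun z => by
    obtain ⟨i, hi⟩ := hcov z
    exact ⟨i, hAc i z hi⟩
  obtain ⟨i0, -⟩ := hcov (fun _ => 0)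
  have hk : 0 < k := i0.pos
  set Sx : (Fin n → ℝ) → Finset (Fin k) :=
    fun x => Finset.univ.filter (fun j => ψ x ≤ lv A c j x) with hSx
  set valid : Finset (Fin k) → Prop :=
    fun S => S.Nonempty ∧ ∀ y, ∃ j ∈ S, lv A c j y ≤ ψ y with hvalid
  have hSxvalid : ∀ x, valid (Sx x) := by
    intro x
    constructor
    · obtain ⟨j, hj⟩ := hact x
      exact ⟨j, Finset.mem_filter.mpr ⟨Finset.mem_univ j, le_of_eq hj⟩⟩
    · intro y
      obtain ⟨j, hj1, hj2⟩ := tplN hk A c ψ hcont hact x y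
      exact ⟨j, Finset.mem_filter.mpr ⟨Finset.mem_univ j, hj1⟩, hj2⟩
  set lst := (Finset.univ.filter valid : Finset (Finset (Fin k))).toList with hlstdef
  have hlst : ∀ x, Sx x ∈ lst := fun x =>
    Finset.mem_toList.mpr (Finset.mem_filter.mpr ⟨Finset.mem_univ _, hSxvalid x⟩)
  have hlstvalid : ∀ S ∈ lst, valid S := fun S hS =>
    (Finset.mem_filter.mp (Finset.mem_toList.mp hS)).2
  set pf : Fin k := ⟨0, hk⟩ with hpf
  set pair : Finset (Fin k) → Fin k × List (Fin k) :=
    fun S => (S.toList.headD pf, S.toList.tail) with hpairdef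
  have hpair : ∀ S : Finset (Fin k), S.Nonempty → (pair S).1 :: (pair S).2 = S.toList := by
    intro S hS
    cases h : S.toList with
    | nil => exact absurd (Finset.toList_eq_nil.mp h) hS.ne_empty
    | cons a l => simp [hpairdef, h]
  have hmemS : ∀ (S : Finset (Fin k)) (hS : S.Nonempty) (j : Fin k),
      j ∈ (pair S).1 :: (pair S).2 ↔ j ∈ S := by
    intro S hS j
    rw [hpair S hS]
    exact Finset.mem_toList
  have f1 : ∀ S, valid S → ∀ x, minOf A c (pair S) x ≤ ψ x := by
    intro S hS x
    obtain ⟨j, hjS, hj⟩ := hS.2 x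
    have hj' : j ∈ (pair S).1 :: (pair S).2 := (hmemS S hS.1 j).mpr hjS
    rcases List.mem_cons.mp hj' with h | h
    · calc minOf A c (pair S) x ≤ lv A c (pair S).1 x :=
            foldlMin_le_init (fun j => lv A c j x) _ _
      _ = lv A c j x := by rw [← h]
      _ ≤ ψ x := hj
    · calc minOf A c (pair S) x ≤ lv A c j x :=
            foldlMin_le_mem (fun j => lv A c j x) _ _ j h
      _ ≤ ψ x := hj
  have f2 : ∀ x, ψ x ≤ minOf A c (pair (Sx x)) x := by
    intro x
    apply le_foldlMin
    · have : (pair (Sx x)).1 ∈ Sx x := by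
        rw [← hmemS (Sx x) (hSxvalid x).1]
        exact List.mem_cons_self
      exact (Finset.mem_filter.mp this).2
    · intro b hb
      have : b ∈ Sx x := by
        rw [← hmemS (Sx x) (hSxvalid x).1]
        exact List.mem_cons_of_mem _ hb
      exact (Finset.mem_filter.mp this).2
  cases hl : lst with
  | nil =>
    exfalso
    have := hlst (fun _ => 0)
    rw [hl] at this
    simp at this
  | cons S1 rest =>
    refine ⟨k, hk, A, c, pair S1, rest.map pair, ?_⟩
    intro x
    apply le_antisymm
    · have hmem := hlst x
      rw [hl] at hmem
      rcases List.mem_cons.mp hmem with h | h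
      · calc ψ x ≤ minOf A c (pair (Sx x)) x := f2 x
        _ = minOf A c (pair S1) x := by rw [h]
        _ ≤ _ := init_le_foldlMax (fun s => minOf A c s x) _ _
      · calc ψ x ≤ minOf A c (pair (Sx x)) x := f2 x
        _ ≤ _ := mem_le_foldlMax (fun s => minOf A c s x) _ _ _
              (List.mem_map_of_mem (f := pair) h)
    · apply foldlMax_le
      · exact f1 S1 (hlstvalid S1 (hl ▸ List.mem_cons_self (a := S1) (l := rest))) x
      · intro s hs
        obtain ⟨S, hS, rfl⟩ := List.mem_map.mp hs
        exact f1 S (hlstvalid S (hl ▸ List.mem_cons_of_mem _ hS)) x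

/-- every continuous piecewise linear function ψ : ℝⁿ → ℝ with finitely many
pieces is exactly represented by a piecewise linear KAN (a KAN with finitely many layers
whose activation functions are continuous piecewise linear with finitely many pieces). -/
theorem stmt10 (n : ℕ) (ψ : (Fin n → ℝ) → ℝ) (hcont : Continuous ψ)
    (hpwl : ∃ k, PWLs n k ψ) :
    ∃ (L : ℕ) (f : (Fin n → ℝ) → (Fin 1 → ℝ)),
      IsKAN (fun φ => Continuous φ ∧ ∃ k, PWL1 k φ) n 1 f L ∧ ∀ x, f x 0 = ψ x := by
  obtain ⟨k, hk, A, c, s₀, SS, hrep⟩ := rep ψ hcont hpwl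
  obtain ⟨L, f, hKAN, heq⟩ := kan_rep A c s₀ SS
  exact ⟨L, f, hKAN, fun x => by rw [heq x, ← hrep x]⟩
end

section
/- Let g: ℝⁿ → ℝ be a ReLU network with L hidden layers of widths n₁, ..., n_L. Then the number of linear regions of g is at most Π_{l=1}^{L} Σ_{j=0}^{d_l} C(n_l, j), where d_l = min{n, n₁, ..., n_l} and C denotes the binomial coefficient. -/
/-- `IsReLUNetW n m g ws` : g is a ReLU network with hidden layers of widths given by the
list ws = [n₁, ..., n_L] (in order), alternating affine maps and elementwise ReLU, with an
affine output layer. -/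
inductive IsReLUNetW : (n m : ℕ) → ((Fin n → ℝ) → (Fin m → ℝ)) → List ℕ → Prop
  | affine {n m : ℕ} (W : Matrix (Fin m) (Fin n) ℝ) (b : Fin m → ℝ) :
      IsReLUNetW n m (fun x => W.mulVec x + b) []
  | comp {n m l : ℕ} {f : (Fin n → ℝ) → (Fin m → ℝ)} {ws : List ℕ}
      (hf : IsReLUNetW n m f ws) (W : Matrix (Fin l) (Fin m) ℝ) (b : Fin l → ℝ) :
      IsReLUNetW n l (fun x => W.mulVec (reluV (f x)) + b) (ws ++ [m])


open Module


def Nb (m d : ℕ) : ℕ := ∑ j ∈ Finset.range (d + 1), Nat.choose m j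

lemma Nb_pos (m d : ℕ) : 1 ≤ Nb m d := by
  have : (0:ℕ) ∈ Finset.range (d+1) := by simp
  calc 1 = Nat.choose m 0 := by simp
    _ ≤ Nb m d := Finset.single_le_sum (f := fun j => Nat.choose m j) (by intros; positivity) this

lemma Nb_pascal (m d : ℕ) : Nb (m + 1) (d + 1) = Nb m (d + 1) + Nb m d := by
  have h1 : Nb m (d + 1) = (∑ j ∈ Finset.range (d + 1), m.choose (j + 1)) + 1 := by
    rw [Nb, Finset.sum_range_succ']; simp
  calc Nb (m + 1) (d + 1)
      = (∑ j ∈ Finset.range (d + 1), (m.choose j + m.choose (j + 1))) + 1 := by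
        rw [Nb, Finset.sum_range_succ']; simp [Nat.choose_succ_succ]
    _ = Nb m (d + 1) + Nb m d := by
        rw [Finset.sum_add_distrib, h1, Nb]; ring

lemma Nb_mono (m d : ℕ) : Nb m d ≤ Nb (m + 1) d := by
  apply Finset.sum_le_sum
  intro j _
  exact Nat.choose_le_choose j (Nat.le_succ m)

lemma Nb_min (m d : ℕ) : Nb m d = Nb m (min m d) := by
  rcases le_total d m with h | h
  · simp [min_eq_right h]
  · rw [min_eq_left h, Nb, Nb]
    symm
    apply Finset.sum_subset
    · exact Finset.range_subset_range.2 (by omega)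
    · intro j _ hj
      simp only [Finset.mem_range] at hj
      exact Nat.choose_eq_zero_of_lt (by omega)

/-- The set of (asymmetric) sign patterns realized by a family of affine functionals. -/
def patSet {V : Type} [AddCommGroup V] [Module ℝ V] {m : ℕ}
    (g : Fin m → V →ₗ[ℝ] ℝ) (c : Fin m → ℝ) : Set (Fin m → Bool) :=
  {s | ∃ x : V, ∀ i, if s i = true then 0 < g i x + c i else g i x + c i ≤ 0}

theorem patCount (m : ℕ) : ∀ (V : Type) [AddCommGroup V] [Module ℝ V]
    [FiniteDimensional ℝ V] (d : ℕ), finrank ℝ V ≤ d →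
    ∀ (g : Fin m → V →ₗ[ℝ] ℝ) (c : Fin m → ℝ), (patSet g c).ncard ≤ Nb m d := by
  induction m with
  | zero =>
      intro V _ _ _ d hd g c
      have h1 : (patSet g c).ncard ≤ 1 := by
        rw [Set.ncard_le_one (Set.toFinite _)]
        exact fun s _ t _ => funext (fun i => i.elim0)
      exact h1.trans (Nb_pos _ _)
  | succ m IH =>
      intro V _ _ _ d hd g c
      set gl := g (Fin.last m) with hgl
      set cl := c (Fin.last m) with hcl
      set g' : Fin m → V →ₗ[ℝ] ℝ := fun i => g i.castSucc with hg'
      set c' : Fin m → ℝ := fun i => c i.castSucc with hc'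
      set S := patSet g c with hS
      set S' := patSet g' c' with hS'
      set drop : (Fin (m+1) → Bool) → (Fin m → Bool) := fun s i => s i.castSucc with hdrop
      have snoc_drop : ∀ s : Fin (m+1) → Bool, Fin.snoc (drop s) (s (Fin.last m)) = s := by
        intro s
        funext i
        refine Fin.lastCases ?_ ?_ i
        · simp [hdrop]
        · intro j; simp [hdrop]
      have drop_mem : ∀ s ∈ S, drop s ∈ S' := by
        rintro s ⟨x, hx⟩
        exact ⟨x, fun i => hx i.castSucc⟩
      set D : Set (Fin m → Bool) :=
        {t | Fin.snoc t true ∈ S ∧ Fin.snoc t false ∈ S} with hD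
      -- Step 1 : ncard S ≤ ncard S' + ncard D
      set S2 : Set (Fin (m+1) → Bool) :=
        {s ∈ S | s (Fin.last m) = false ∧ Fin.snoc (drop s) true ∈ S} with hS2
      set S1 : Set (Fin (m+1) → Bool) := S \ S2 with hS1
      have hunion : S ⊆ S1 ∪ S2 := by
        intro s hs
        by_cases h : s ∈ S2
        · exact Or.inr h
        · exact Or.inl ⟨hs, h⟩
      have hinj1 : Set.InjOn drop S1 := by
        intro s1 h1 s2 h2 he
        by_cases hl : s1 (Fin.last m) = s2 (Fin.last m)
        · rw [← snoc_drop s1, ← snoc_drop s2, he, hl]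
        · exfalso
          rcases Bool.eq_false_or_eq_true (s1 (Fin.last m)) with hb1 | hb1 <;>
            rcases Bool.eq_false_or_eq_true (s2 (Fin.last m)) with hb2 | hb2
          · exact hl (hb1.trans hb2.symm)
          · apply h2.2
            refine ⟨h2.1, hb2, ?_⟩
            rw [← he, ← hb1, snoc_drop]
            exact h1.1
          · apply h1.2
            refine ⟨h1.1, hb1, ?_⟩
            rw [he, ← hb2, snoc_drop]
            exact h2.1
          · exact hl (hb1.trans hb2.symm)
      have hinj2 : Set.InjOn drop S2 := by
        intro s1 h1 s2 h2 he
        rw [← snoc_drop s1, ← snoc_drop s2, he, h1.2.1, h2.2.1]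
      have him2 : drop '' S2 ⊆ D := by
        rintro t ⟨s, hs, rfl⟩
        refine ⟨hs.2.2, ?_⟩
        rw [← hs.2.1, snoc_drop]
        exact hs.1
      have hcard1 : S1.ncard ≤ S'.ncard := by
        rw [← Set.ncard_image_of_injOn hinj1]
        exact Set.ncard_le_ncard (fun t ⟨s, hs, he⟩ => he ▸ drop_mem s hs.1) (Set.toFinite _)
      have hcard2 : S2.ncard ≤ D.ncard := by
        rw [← Set.ncard_image_of_injOn hinj2]
        exact Set.ncard_le_ncard him2 (Set.toFinite _)
      have hstep1 : S.ncard ≤ S'.ncard + D.ncard := by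
        calc S.ncard ≤ (S1 ∪ S2).ncard := Set.ncard_le_ncard hunion (Set.toFinite _)
          _ ≤ S1.ncard + S2.ncard := Set.ncard_union_le _ _
          _ ≤ S'.ncard + D.ncard := Nat.add_le_add hcard1 hcard2
      -- root construction on segments
      have hroot : ∀ t ∈ D, ∃ z : V, gl z + cl = 0 ∧
          ∀ i : Fin m, if t i = true then 0 < g' i z + c' i else g' i z + c' i ≤ 0 := by
        rintro t ⟨⟨xp, hxp⟩, ⟨xm, hxm⟩⟩
        have hb : 0 < gl xp + cl := by
          have h := hxp (Fin.last m)
          rwa [if_pos (by simp)] at h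
        have ha : gl xm + cl ≤ 0 := by
          have h := hxm (Fin.last m)
          rwa [if_neg (by simp)] at h
        set a := gl xm + cl with hha
        set b := gl xp + cl with hhb
        have hba : 0 < b - a := by linarith
        set θ : ℝ := (-a)/(b-a) with hθ
        have hθ0 : 0 ≤ θ := div_nonneg (by linarith) hba.le
        have hθ1 : θ ≤ 1 := by rw [hθ, div_le_one hba]; linarith
        refine ⟨xm + θ • (xp - xm), ?_, ?_⟩
        · have h1 : gl (xm + θ • (xp - xm)) = gl xm + θ * (gl xp - gl xm) := by
            simp [map_add, map_smul, map_sub, smul_eq_mul]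
          have h2 : gl xp - gl xm = b - a := by rw [hhb, hha]; ring
          have h3 : θ * (b - a) = -a := div_mul_cancel₀ (-a) (ne_of_gt hba)
          rw [h1, h2, h3]; rw [hha] at *; ring
        · intro i
          have hp := hxp i.castSucc
          have hm := hxm i.castSucc
          rw [Fin.snoc_castSucc] at hp hm
          have hval : g' i (xm + θ • (xp - xm)) + c' i
              = (1-θ) * (g' i xm + c' i) + θ * (g' i xp + c' i) := by
            simp only [map_add, map_smul, map_sub, smul_eq_mul]
            ring
          simp only [hg', hc'] at hval
          simp only [hg', hc']
          rw [hval]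
          by_cases ht : t i = true
          · rw [if_pos ht] at hp hm ⊢
            rcases le_total ((g i.castSucc) xm + c i.castSucc) ((g i.castSucc) xp + c i.castSucc)
              with hcc | hcc
            · linarith [mul_le_mul_of_nonneg_left hcc hθ0]
            · linarith [mul_le_mul_of_nonneg_left hcc (sub_nonneg.2 hθ1)]
          · rw [if_neg ht] at hp hm ⊢
            rcases le_total ((g i.castSucc) xm + c i.castSucc) ((g i.castSucc) xp + c i.castSucc)
              with hcc | hcc
            · linarith [mul_le_mul_of_nonneg_left hcc (sub_nonneg.2 hθ1)]
            · linarith [mul_le_mul_of_nonneg_left hcc hθ0]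
      rcases d with _ | d'
      · -- dimension 0 : D is empty
        have hsub : Subsingleton V := by
          have : finrank ℝ V = 0 := by omega
          exact finrank_zero_iff.1 this
        have hDempty : D = ∅ := by
          rw [Set.eq_empty_iff_forall_notMem]
          rintro t ⟨⟨xp, hxp⟩, ⟨xm, hxm⟩⟩
          have hb : 0 < gl xp + cl := by
            have h := hxp (Fin.last m)
            rwa [if_pos (by simp)] at h
          have ha : gl xm + cl ≤ 0 := by
            have h := hxm (Fin.last m)
            rwa [if_neg (by simp)] at h
          rw [Subsingleton.elim xp xm] at hb
          linarith
        calc S.ncard ≤ S'.ncard + D.ncard := hstep1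
          _ = S'.ncard := by rw [hDempty, Set.ncard_empty, add_zero]
          _ ≤ Nb m 0 := IH V 0 (by omega) g' c'
          _ ≤ Nb (m+1) 0 := Nb_mono _ _
      · rcases Set.eq_empty_or_nonempty D with hDe | ⟨t0, ht0⟩
        · calc S.ncard ≤ S'.ncard + D.ncard := hstep1
            _ = S'.ncard := by rw [hDe, Set.ncard_empty, add_zero]
            _ ≤ Nb m (d'+1) := IH V (d'+1) hd g' c'
            _ ≤ Nb (m+1) (d'+1) := Nb_mono _ _
        · obtain ⟨z0, hz0, -⟩ := hroot t0 ht0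
          have hglne : gl ≠ 0 := by
            obtain ⟨⟨xp, hxp⟩, -⟩ := ht0
            have hb : 0 < gl xp + cl := by
              have h := hxp (Fin.last m)
              rwa [if_pos (by simp)] at h
            intro h0
            rw [h0] at hz0 hb
            simp only [LinearMap.zero_apply, zero_add] at hz0 hb
            linarith
          have hsurj : Function.Surjective gl := by
            obtain ⟨v, hv⟩ : ∃ v, gl v ≠ 0 := by
              by_contra h
              push_neg at h
              exact hglne (LinearMap.ext fun v => h v)
            intro r
            exact ⟨(r / gl v) • v, by simp [map_smul, smul_eq_mul, div_mul_cancel₀ r hv]⟩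
          have hrank := LinearMap.finrank_range_add_finrank_ker gl
          have hrtop : LinearMap.range gl = ⊤ := LinearMap.range_eq_top.2 hsurj
          rw [hrtop, finrank_top] at hrank
          have hfr : finrank ℝ ℝ = 1 := finrank_self ℝ
          have hW : finrank ℝ (LinearMap.ker gl) ≤ d' := by omega
          set W := LinearMap.ker gl with hWdef
          set h : Fin m → W →ₗ[ℝ] ℝ := fun i => (g' i).comp W.subtype with hh
          set e : Fin m → ℝ := fun i => g' i z0 + c' i with he
          have hDsub : D ⊆ patSet h e := by
            intro t ht
            obtain ⟨z, hz, hzi⟩ := hroot t ht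
            have hy : z - z0 ∈ W := by
              rw [hWdef, LinearMap.mem_ker, map_sub]
              linarith
            refine ⟨⟨z - z0, hy⟩, fun i => ?_⟩
            have hcomp : h i ⟨z - z0, hy⟩ + e i = g' i z + c' i := by
              simp only [hh, he, LinearMap.comp_apply, Submodule.coe_subtype, map_sub]
              ring
            rw [hcomp]
            exact hzi i
          calc S.ncard ≤ S'.ncard + D.ncard := hstep1
            _ ≤ Nb m (d'+1) + Nb m d' := add_le_add (IH V (d'+1) hd g' c')
                ((Set.ncard_le_ncard hDsub (Set.toFinite _)).trans (IH W d' hW h e))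
            _ = Nb (m+1) (d'+1) := (Nb_pascal m d').symm

lemma foldr_min_append (l : List ℕ) (a n : ℕ) :
    (l ++ [a]).foldr Nat.min n = min a (l.foldr Nat.min n) := by
  induction l with
  | nil => rfl
  | cons b l ih =>
      show min b ((l ++ [a]).foldr Nat.min n) = min a (min b (l.foldr Nat.min n))
      rw [ih]
      exact min_left_comm b a _

def Kdef (n : ℕ) (ws : List ℕ) : ℕ :=
  ∏ i ∈ Finset.range ws.length,
    ∑ j ∈ Finset.range (((ws.take (i + 1)).foldr Nat.min n) + 1),
      Nat.choose (ws.getD i 0) j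

lemma Kdef_append (n m : ℕ) (ws : List ℕ) :
    Kdef n (ws ++ [m]) = Kdef n ws * Nb m ((ws ++ [m]).foldr Nat.min n) := by
  have hl : (ws ++ [m]).length = ws.length + 1 := by simp
  rw [Kdef, hl, Finset.prod_range_succ]
  congr 1
  · rw [Kdef]
    apply Finset.prod_congr rfl
    intro i hi
    simp only [Finset.mem_range] at hi
    rw [List.take_append_of_le_length (by omega), List.getD_append _ _ _ _ (by omega)]
  · rw [show (ws ++ [m]).take (ws.length + 1) = ws ++ [m] by rw [← hl]; exact List.take_length,
      List.getD_append_right _ _ _ _ (le_refl _)]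
    simp [Nb]

theorem mainAux {n m : ℕ} {f : (Fin n → ℝ) → (Fin m → ℝ)} {ws : List ℕ}
    (hf : IsReLUNetW n m f ws) :
    ∃ k, k ≤ Kdef n ws ∧ ∃ P : Fin k → Set (Fin n → ℝ), (∀ x, ∃ i, x ∈ P i) ∧
      ∀ i, ∃ (A : Matrix (Fin m) (Fin n) ℝ) (c : Fin m → ℝ),
        A.rank ≤ ws.foldr Nat.min n ∧ ∀ x ∈ P i, f x = A.mulVec x + c := by
  induction hf with
  | @affine m W b =>
      refine ⟨1, ?_, fun _ => Set.univ, fun x => ⟨0, trivial⟩,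
        fun i => ⟨W, b, ?_, fun x _ => rfl⟩⟩
      · simp [Kdef]
      · simpa using W.rank_le_card_width
  | @comp m l f ws hf2 W b IH =>
      obtain ⟨k', hk', P, hcov, hP⟩ := IH
      choose A c hrank haff using hP
      set D' := ws.foldr Nat.min n with hD'
      -- the pattern sets for each piece
      set gfun : (i : Fin k') →
          Fin m → (LinearMap.range (A i).mulVecLin : Submodule ℝ (Fin m → ℝ)) →ₗ[ℝ] ℝ :=
        fun i j => (LinearMap.proj j).comp (Submodule.subtype _) with hgfun
      have hScard : ∀ i : Fin k', (patSet (gfun i) (c i)).ncard ≤ Nb m D' := by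
        intro i
        exact patCount m _ D' (hrank i) (gfun i) (c i)
      set Fi : Fin k' → Finset (Fin m → Bool) :=
        fun i => (Set.toFinite (patSet (gfun i) (c i))).toFinset with hFi
      have hFicard : ∀ i, (Fi i).card ≤ Nb m D' := by
        intro i
        rw [hFi, ← Set.ncard_eq_toFinset_card]
        exact hScard i
      set ι := (i : Fin k') × {s : Fin m → Bool // s ∈ Fi i} with hι
      set k := Fintype.card ι with hk
      set e : Fin k ≃ ι := (Fintype.equivFin ι).symm with he
      have hkbound : k ≤ Kdef n (ws ++ [m]) := by
        have h1 : k = ∑ i : Fin k', (Fi i).card := by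
          show Fintype.card ι = _
          rw [Fintype.card_sigma]
          exact Finset.sum_congr rfl fun i _ => Fintype.card_coe _
        have h2 : k ≤ k' * Nb m D' := by
          rw [h1]
          calc ∑ i : Fin k', (Fi i).card ≤ ∑ _i : Fin k', Nb m D' :=
                Finset.sum_le_sum (fun i _ => hFicard i)
            _ = k' * Nb m D' := by simp [Finset.sum_const, mul_comm]
        calc k ≤ k' * Nb m D' := h2
          _ ≤ Kdef n ws * Nb m D' := Nat.mul_le_mul_right _ hk'
          _ = Kdef n ws * Nb m ((ws ++ [m]).foldr Nat.min n) := by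
              rw [foldr_min_append, ← hD', Nb_min m D']
          _ = Kdef n (ws ++ [m]) := (Kdef_append n m ws).symm
      set Q : ι → Set (Fin n → ℝ) := fun q =>
        {x | x ∈ P q.1 ∧ ∀ j : Fin m, if (q.2 : Fin m → Bool) j = true
            then 0 ≤ (A q.1).mulVec x j + c q.1 j
            else (A q.1).mulVec x j + c q.1 j ≤ 0} with hQ
      refine ⟨k, hkbound, fun q => Q (e q), ?_, ?_⟩
      · -- covering
        intro x
        obtain ⟨i, hx⟩ := hcov x
        set s : Fin m → Bool := fun j => decide (0 < (A i).mulVec x j + c i j) with hs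
        have hmem : s ∈ patSet (gfun i) (c i) := by
          refine ⟨⟨(A i).mulVec x, ⟨x, by rw [Matrix.mulVecLin_apply]⟩⟩, fun j => ?_⟩
          have hval : gfun i j ⟨(A i).mulVec x, ⟨x, by rw [Matrix.mulVecLin_apply]⟩⟩
              = (A i).mulVec x j := rfl
          rw [hval, hs]
          by_cases hc : 0 < (A i).mulVec x j + c i j
          · rw [if_pos (by simp [hc])]
            exact hc
          · rw [if_neg (by simp [hc])]
            exact le_of_not_gt hc
        have hsF : s ∈ Fi i := by
          rw [hFi, Set.Finite.mem_toFinset]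
          exact hmem
        refine ⟨e.symm ⟨i, ⟨s, hsF⟩⟩, ?_⟩
        show x ∈ Q (e (e.symm ⟨i, ⟨s, hsF⟩⟩))
        rw [e.apply_symm_apply]
        refine ⟨hx, fun j => ?_⟩
        show (if s j = true then _ else _)
        by_cases hc : 0 < (A i).mulVec x j + c i j
        · rw [if_pos (by simp [hs, hc])]
          exact hc.le
        · rw [if_neg (by simp [hs, hc])]
          exact le_of_not_gt hc
      · -- affine on each piece
        intro q0
        set q := e q0 with hq
        set i := q.1 with hi
        set s : Fin m → Bool := (q.2 : Fin m → Bool) with hsdef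
        set E : Matrix (Fin m) (Fin m) ℝ :=
          Matrix.diagonal (fun j => if s j = true then (1:ℝ) else 0) with hE
        refine ⟨W * E * A i, (W * E).mulVec (c i) + b, ?_, ?_⟩
        · rw [foldr_min_append, ← hD']
          refine le_min ?_ ?_
          · calc (W * E * A i).rank ≤ (W * E).rank := Matrix.rank_mul_le_left _ _
              _ ≤ m := by simpa using (W * E).rank_le_card_width
          · exact (Matrix.rank_mul_le_right _ _).trans (hrank i)
        · intro x hx
          have hx1 : x ∈ P i := hx.1
          have hx2 := hx.2
          have hf'x : f x = (A i).mulVec x + c i := haff i x hx1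
          have hrelu : reluV (f x) = E.mulVec (f x) := by
            funext j
            rw [hE, Matrix.mulVec_diagonal]
            by_cases hc : s j = true
            · rw [if_pos hc]
              have h0 : 0 ≤ f x j := by
                have := hx2 j
                rw [if_pos hc] at this
                rw [hf'x]
                exact this
              rw [one_mul]
              exact max_eq_left h0
            · rw [if_neg hc]
              have h0 : f x j ≤ 0 := by
                have := hx2 j
                rw [if_neg hc] at this
                rw [hf'x]
                exact this
              rw [zero_mul]
              exact max_eq_right h0
          show W.mulVec (reluV (f x)) + b = _
          rw [hrelu, hf'x]
          simp only [Matrix.mulVec_add, Matrix.mulVec_mulVec, Matrix.mul_assoc]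
          abel


/-- Montúfar-type bound: a ReLU network g : ℝⁿ → ℝ with hidden layer widths
n₁, ..., n_L has at most Π_{l=1}^L Σ_{j=0}^{d_l} C(n_l, j) linear regions, where
d_l = min{n, n₁, ..., n_l}. -/
theorem stmt14 (n : ℕ) (ws : List ℕ) (g : (Fin n → ℝ) → (Fin 1 → ℝ))
    (hg : IsReLUNetW n 1 g ws) :
    PWL n 1
      (∏ i ∈ Finset.range ws.length,
        ∑ j ∈ Finset.range (((ws.take (i + 1)).foldr Nat.min n) + 1),
          Nat.choose (ws.getD i 0) j) g := by
  obtain ⟨k, hk, P, hcov, hP⟩ := mainAux hg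
  show PWL n 1 (Kdef n ws) g
  obtain ⟨i0, -⟩ := hcov 0
  refine ⟨fun q => P (if h : (q : ℕ) < k then ⟨q, h⟩ else i0), ?_, ?_⟩
  · intro x
    obtain ⟨i, hx⟩ := hcov x
    refine ⟨⟨i, lt_of_lt_of_le i.isLt hk⟩, ?_⟩
    simpa [i.isLt] using hx
  · intro q
    obtain ⟨A, c, -, hA⟩ := hP (if h : (q : ℕ) < k then ⟨q, h⟩ else i0)
    exact ⟨A, c, hA⟩
end

section
/- Let s: ℝ → ℝ be a continuous spline with breakpoints b₁ < ... < b_{k−1} that agrees with polynomial P₁ on (−∞, b₁], with Pᵢ on [bᵢ₋₁, bᵢ] for 1 < i < k, and with P_k on [b_{k−1}, ∞). Then for all x ∈ ℝ, s(x) = P₁(x) + Σ_{i=1}^{k−1} (Pᵢ₊₁^{bᵢ} − Pᵢ^{bᵢ})(ReLU(x − bᵢ)), where P^b(y) = P(y + b). -/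
/-!
With `n` the number of breakpoints `bᵢ ≤ x`, we have `s x = Pₙ(x)`. Since
`ReLU(x - bᵢ) + bᵢ = max x bᵢ`, the `i`-th summand is `Pᵢ₊₁(x) - Pᵢ(x)` when `bᵢ ≤ x`,
and `Pᵢ₊₁(bᵢ) - Pᵢ(bᵢ) = 0` by continuity otherwise, so the sum telescopes to
`Pₙ(x) - P₀(x)`.
-/

open Finset

namespace Fin

theorem sum_univ_succ_sub_castSucc {M : Type*} [AddCommGroup M] {m : ℕ}
    (f : Fin (m + 1) → M) : ∑ i : Fin m, (f i.succ - f i.castSucc) = f (last m) - f 0 := by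
  induction m with
  | zero => simp
  | succ m ih =>
    simp only [sum_univ_castSucc, succ_castSucc, ih (fun i => f i.castSucc), succ_last,
      castSucc_zero]
    abel

theorem sum_ite_castSucc_lt_succ_sub_castSucc {M : Type*} [AddCommGroup M] {m : ℕ}
    (f : Fin (m + 1) → M) (n : Fin (m + 1)) :
    ∑ i : Fin m, (if i.castSucc < n then f i.succ - f i.castSucc else 0) = f n - f 0 := by
  have hterm (i : Fin m) : (if i.castSucc < n then f i.succ - f i.castSucc else 0) =
      f (min i.succ n) - f (min i.castSucc n) := by
    split_ifs with h
    · rw [min_eq_left (castSucc_lt_iff_succ_le.1 h), min_eq_left h.le]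
    · rw [not_lt] at h
      rw [min_eq_right h, min_eq_right (h.trans (castSucc_le_succ i)), sub_self]
  rw [sum_congr rfl fun i _ => hterm i, sum_univ_succ_sub_castSucc (fun k => f (min k n)),
    min_eq_right (le_last n), min_eq_left (zero_le n)]

theorem exists_castSucc_lt_iff_of_monotone {α : Type*} [Preorder α] {m : ℕ} {b : Fin m → α}
    (hb : Monotone b) (x : α) : ∃ n : Fin (m + 1), ∀ j : Fin m, j.castSucc < n ↔ b j ≤ x := by
  obtain h | ⟨a, h⟩ := ((isLowerSet_Iic x).preimage hb).eq_univ_or_Iio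
  · exact ⟨last m, fun j => ⟨fun _ => Set.eq_univ_iff_forall.1 h j,
      fun _ => castSucc_lt_last j⟩⟩
  · refine ⟨a.castSucc, fun j => ?_⟩
    rw [castSucc_lt_castSucc_iff, ← Set.mem_Iio, ← h]
    rfl

end Fin

theorem max_sub_zero_add {α : Type*} [AddGroup α] [LinearOrder α] [AddRightMono α] (x c : α) :
    max (x - c) 0 + c = max x c := by
  rw [← max_add_add_right, sub_add_cancel, zero_add]

theorem sub_apply_max_eq_ite {α β : Type*} [LinearOrder α] [AddGroup β] {f g : α → β} {c : α}
    (h : f c = g c) (x : α) : f (max x c) - g (max x c) = if c ≤ x then f x - g x else 0 := by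
  split_ifs with hc
  · rw [max_eq_left hc]
  · rw [max_eq_right (not_le.1 hc).le, h, sub_self]

/-- a continuous spline with breakpoints b₀ < ... < b_{m-1}, agreeing with
polynomial `P i` on the i-th segment, equals
P₀(x) + Σᵢ (P_{i+1}^{bᵢ} − P_i^{bᵢ})(ReLU(x − bᵢ)), where P^b(y) = P(y + b). -/
theorem stmt17 (m : ℕ) (b : Fin m → ℝ) (P : Fin (m + 1) → Polynomial ℝ) (s : ℝ → ℝ)
    (hb : StrictMono b)
    (hcontinuity : ∀ i : Fin m, (P i.castSucc).eval (b i) = (P i.succ).eval (b i))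
    (hseg : ∀ i : Fin (m + 1), ∀ x : ℝ,
      (∀ j : Fin m, (j : ℕ) < (i : ℕ) → b j ≤ x) →
      (∀ j : Fin m, (i : ℕ) ≤ (j : ℕ) → x ≤ b j) →
      s x = (P i).eval x) :
    ∀ x : ℝ,
      s x = (P 0).eval x + ∑ i : Fin m,
        ((P i.succ).eval (max (x - b i) 0 + b i) - (P i.castSucc).eval (max (x - b i) 0 + b i)) := by
  intro x
  obtain ⟨n, hn⟩ := Fin.exists_castSucc_lt_iff_of_monotone hb.monotone x
  have hterm (i : Fin m) :
      (P i.succ).eval (max (x - b i) 0 + b i) - (P i.castSucc).eval (max (x - b i) 0 + b i) =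
        if i.castSucc < n then (P i.succ).eval x - (P i.castSucc).eval x else 0 := by
    simp only [max_sub_zero_add, hn]
    exact sub_apply_max_eq_ite (f := fun y => (P i.succ).eval y)
      (g := fun y => (P i.castSucc).eval y) (hcontinuity i).symm x
  have hsx : s x = (P n).eval x :=
    hseg n x (fun j hj => (hn j).1 (Fin.lt_def.2 hj))
      fun j hj => le_of_not_ge fun hbj => not_lt.2 (Fin.le_def.2 hj) ((hn j).2 hbj)
  rw [sum_congr rfl fun i _ => hterm i,
    Fin.sum_ite_castSucc_lt_succ_sub_castSucc (fun k => (P k).eval x), hsx]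
  abel
end
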